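/- arXiv:1506.06360 — 3 statements merged into one kernel-verified Lean document; each statement's English description precedes it below -/
import Mathlib

section
/- For every real w > 0, the Fourier sine transform of 1/(e^{2πt}-1) satisfies ∫₀^∞ sin(wt)/(e^{2πt}-1) dt = (1/2)(1/(e^w - 1) + 1/2 - 1/w). -/
/-!
Expanding `1 / (e^{2πt} - 1) = ∑ₙ e^{-2π(n+1)t}` and integrating termwise against `sin (w t)`
(each term is a Laplace transform of the sine) turns the integral into
`∑ₙ w / ((2π(n+1))² + w²)`. This is the Mittag-Leffler expansion of `coth`, i.e. of
`π cot (π z) = 1 / z + ∑ₙ 2z / (z² - (n+1)²)` at the imaginary point `z = i w / (2π)`.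
-/

open MeasureTheory Set Real Complex

theorem integral_exp_neg_mul_mul_sin {b : ℝ} (hb : 0 < b) (c : ℝ) :
    ∫ t in Ioi 0, Real.exp (-b * t) * Real.sin (c * t) = c / (b ^ 2 + c ^ 2) := by
  have hre : (-b + c * I).re < 0 := by simpa using hb
  have h := integral_im (integrableOn_exp_mul_complex_Ioi hre 0)
  rw [integral_exp_mul_complex_Ioi hre] at h
  simpa [Complex.exp_im, Complex.normSq_apply, neg_div, ← sq] using h

theorem integrableOn_exp_neg_mul_mul_sin {b : ℝ} (hb : 0 < b) (c : ℝ) :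
    IntegrableOn (fun t => Real.exp (-b * t) * Real.sin (c * t)) (Ioi 0) := by
  have hre : (-b + c * I).re < 0 := by simpa using hb
  simpa [IntegrableOn, Complex.exp_im] using (integrableOn_exp_mul_complex_Ioi hre 0).im

theorem integral_mul_exp_neg_mul {b : ℝ} (hb : 0 < b) :
    ∫ t in Ioi 0, t * Real.exp (-b * t) = 1 / b ^ 2 := by
  have h := integral_rpow_mul_exp_neg_mul_Ioi two_pos hb
  rw [show (2:ℝ) - 1 = 1 by norm_num, Real.Gamma_two, mul_one] at h
  simpa [neg_mul] using h

theorem integral_norm_exp_neg_mul_mul_sin_le {b : ℝ} (hb : 0 < b) (c : ℝ) :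
    ∫ t in Ioi 0, ‖Real.exp (-b * t) * Real.sin (c * t)‖ ≤ |c| / b ^ 2 := by
  have hmaj : ∫ t in Ioi 0, |c| * (t * Real.exp (-b * t)) = |c| / b ^ 2 := by
    rw [integral_const_mul, integral_mul_exp_neg_mul hb, mul_one_div]
  rw [← hmaj]
  have hint : IntegrableOn (fun t => t * Real.exp (-b * t)) (Ioi 0) :=
    Integrable.of_integral_ne_zero (by rw [integral_mul_exp_neg_mul hb]; positivity)
  refine setIntegral_mono_on (integrableOn_exp_neg_mul_mul_sin hb c).norm (hint.const_mul |c|)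
    measurableSet_Ioi fun t ht => ?_
  rw [norm_mul, Real.norm_of_nonneg (Real.exp_pos _).le, Real.norm_eq_abs]
  calc Real.exp (-b * t) * |Real.sin (c * t)| ≤ Real.exp (-b * t) * (|c| * t) := by
        gcongr
        simpa [abs_mul, abs_of_pos (mem_Ioi.mp ht)] using Real.abs_sin_le_abs (x := c * t)
    _ = _ := by ring

theorem hasSum_exp_neg_succ_mul {x : ℝ} (hx : 0 < x) :
    HasSum (fun n : ℕ => Real.exp (-((n + 1) * x))) (Real.exp x - 1)⁻¹ := by
  have h := (hasSum_geometric_of_lt_one (Real.exp_pos _).le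
    (Real.exp_lt_one_iff.mpr (neg_neg_of_pos hx))).mul_left (Real.exp (-x))
  have hterm (n : ℕ) : Real.exp (-x) * Real.exp (-x) ^ n = Real.exp (-((n + 1) * x)) := by
    rw [← Real.exp_nat_mul, ← Real.exp_add]
    ring_nf
  have hsum : Real.exp (-x) * (1 - Real.exp (-x))⁻¹ = (Real.exp x - 1)⁻¹ := by
    have : Real.exp x - 1 ≠ 0 := sub_ne_zero.mpr (Real.one_lt_exp_iff.mpr hx).ne'
    rw [Real.exp_neg]
    field_simp
  simpa only [hterm, hsum] using h

theorem hasSum_integral_sin_div_exp_sub_one {a : ℝ} (ha : 0 < a) (w : ℝ) :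
    HasSum (fun n : ℕ => w / ((a * (n + 1)) ^ 2 + w ^ 2))
      (∫ t in Ioi 0, Real.sin (w * t) / (Real.exp (a * t) - 1)) := by
  have hb (n : ℕ) : 0 < a * (n + 1) := by positivity
  have hbound : Summable fun n : ℕ => |w| / (a * (n + 1)) ^ 2 := by
    have h := (summable_nat_add_iff 1).mpr (Real.summable_one_div_nat_pow.mpr one_lt_two)
    refine (h.mul_left (|w| / a ^ 2)).congr fun n => ?_
    push_cast
    field_simp
  have h := hasSum_integral_of_summable_integral_norm (μ := volume.restrict (Ioi 0))
    (F := fun (n : ℕ) t => Real.exp (-(a * (n + 1)) * t) * Real.sin (w * t))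
    (fun n => integrableOn_exp_neg_mul_mul_sin (hb n) w)
    (hbound.of_nonneg_of_le (fun n => integral_nonneg fun t => norm_nonneg _)
      fun n => integral_norm_exp_neg_mul_mul_sin_le (hb n) w)
  have hsum : ∫ t in Ioi 0, ∑' n : ℕ, Real.exp (-(a * (n + 1)) * t) * Real.sin (w * t) =
      ∫ t in Ioi 0, Real.sin (w * t) / (Real.exp (a * t) - 1) := by
    refine setIntegral_congr_fun measurableSet_Ioi fun t ht => ?_
    rw [div_eq_mul_inv,
      ← ((hasSum_exp_neg_succ_mul (mul_pos ha ht)).mul_left (Real.sin (w * t))).tsum_eq]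
    exact tsum_congr fun n => by ring_nf
  simpa only [integral_exp_neg_mul_mul_sin (hb _), hsum] using h

theorem ofReal_mul_I_mem_integerComplement {y : ℝ} (hy : y ≠ 0) :
    (y : ℂ) * I ∈ integerComplement :=
  fun ⟨n, hn⟩ => hy (by simpa using congrArg Complex.im hn.symm)

theorem cotTerm_ofReal_mul_I {y : ℝ} (hy : y ≠ 0) (n : ℕ) :
    cotTerm (y * I) n = -I * ((2 * y / (y ^ 2 + (n + 1) ^ 2) : ℝ) : ℂ) := by
  have hprod : (y * I + (n + 1)) * (y * I - (n + 1)) = -((y : ℂ) ^ 2 + (n + 1) ^ 2) := by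
    linear_combination (y : ℂ) ^ 2 * I_sq
  rw [cotTerm_identity (ofReal_mul_I_mem_integerComplement hy), hprod, one_div, inv_neg]
  push_cast
  ring

theorem hasSum_two_mul_div_sq_add_succ_sq {y : ℝ} (hy : y ≠ 0) :
    HasSum (fun n : ℕ => 2 * y / (y ^ 2 + (n + 1) ^ 2))
      (π * (Real.exp (2 * π * y) + 1) / (Real.exp (2 * π * y) - 1) - 1 / y) := by
  have hz := ofReal_mul_I_mem_integerComplement hy
  have hexp : Complex.exp (2 * π * I * (y * I)) = (Real.exp (2 * π * y) : ℂ)⁻¹ := by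
    push_cast
    rw [← Complex.exp_neg]
    congr 1
    linear_combination (2 * π * (y : ℂ)) * I_sq
  have hE : (Real.exp (2 * π * y) : ℂ) - 1 ≠ 0 := by
    exact_mod_cast sub_ne_zero.mpr (by simpa [Real.exp_eq_one_iff] using hy)
  have hval : I * (π * cot (π * (y * I)) - 1 / (y * I)) =
      ((π * (Real.exp (2 * π * y) + 1) / (Real.exp (2 * π * y) - 1) - 1 / y : ℝ) : ℂ) := by
    rw [cot_pi_eq_exp_ratio, hexp]
    push_cast
    field_simp
    ring
  have h := (summable_cotTerm hz).hasSum.mul_left I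
  simp_rw [← cot_series_rep' hz, hval, cotTerm_ofReal_mul_I hy, ← mul_assoc, mul_neg, I_mul_I,
    neg_neg, one_mul, Complex.hasSum_ofReal] at h
  exact h

/-- For every real `w > 0`,
`∫₀^∞ sin(wt)/(e^{2πt}-1) dt = (1/2)(1/(e^w - 1) + 1/2 - 1/w)`. -/
theorem fourier_sine_transform_bose (w : ℝ) (hw : 0 < w) :
    ∫ t in Set.Ioi (0:ℝ), Real.sin (w * t) / (Real.exp (2 * Real.pi * t) - 1) =
      (1/2) * (1 / (Real.exp w - 1) + 1/2 - 1/w) := by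
  have hπ := Real.pi_pos
  have hterm (n : ℕ) : 1 / (4 * π) * (2 * (w / (2 * π)) / ((w / (2 * π)) ^ 2 + (n + 1) ^ 2)) =
      w / ((2 * π * (n + 1)) ^ 2 + w ^ 2) := by
    field_simp
    ring
  have hcoth := (hasSum_two_mul_div_sq_add_succ_sq (y := w / (2 * π)) (by positivity)).mul_left
    (1 / (4 * π))
  simp only [hterm] at hcoth
  rw [(hasSum_integral_sin_div_exp_sub_one Real.two_pi_pos w).unique hcoth,
    mul_div_cancel₀ w (by positivity : 2 * π ≠ 0)]
  have : Real.exp w - 1 ≠ 0 := sub_ne_zero.mpr (Real.one_lt_exp_iff.mpr hw).ne'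
  field_simp
  ring
end

section
/- For all complex s with 0 < Re(s) < 1, ζ(s)Γ(s) = ∫₀^∞ t^{s-1} (1/(e^t - 1) - 1/t) dt. -/
/-!
For `re s > 1`, expanding `1 / (e^t - 1) = ∑ e^{-(n+1)t}` gives
`∫₀^∞ t^{s-1} / (e^t - 1) dt = Γ(s) ζ(s)`. Subtracting `1 / t` on `(0, 1]` yields a kernel that is
bounded at `0` and decays exponentially, so its Mellin transform `M(s)` is holomorphic on
`re s > 0` and equals `Γ(s) ζ(s) - 1 / (s - 1)` for `re s > 1`. By the identity theorem this holds
for all `re s > 0`, `s ≠ 1`. For `0 < re s < 1`, subtracting also `1 / t` on `(1, ∞)` changes the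
Mellin transform by `∫₁^∞ t^{s-2} dt = -1 / (s - 1)`, which cancels the pole term.
-/

open MeasureTheory Set Filter Topology Asymptotics Complex

namespace Real

lemma exp_sub_one_le_mul_exp (t : ℝ) : exp t - 1 ≤ t * exp t := by
  have hinv : exp (-t) * exp t = 1 := by rw [← exp_add, neg_add_cancel, exp_zero]
  nlinarith [add_one_le_exp (-t), exp_pos t]

lemma one_div_exp_sub_one_nonneg {t : ℝ} (ht : 0 ≤ t) : 0 ≤ 1 / (exp t - 1) :=
  one_div_nonneg.mpr (sub_nonneg.mpr (one_le_exp ht))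

lemma one_div_exp_sub_one_le_one_div {t : ℝ} (ht : 0 < t) : 1 / (exp t - 1) ≤ 1 / t :=
  one_div_le_one_div_of_le ht (by linarith [add_one_le_exp t])

lemma one_div_sub_one_div_exp_sub_one_le_one {t : ℝ} (ht : 0 < t) :
    1 / t - 1 / (exp t - 1) ≤ 1 := by
  have hpos : 0 < exp t - 1 := sub_pos.mpr (one_lt_exp_iff.mpr ht)
  rw [div_sub_div _ _ ht.ne' hpos.ne', div_le_one (by positivity)]
  linarith [exp_sub_one_le_mul_exp t]

lemma abs_one_div_exp_sub_one_sub_one_div_le_one {t : ℝ} (ht : 0 < t) :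
    |1 / (exp t - 1) - 1 / t| ≤ 1 := by
  rw [abs_sub_comm, abs_le]
  constructor <;> linarith [one_div_exp_sub_one_le_one_div ht,
    one_div_sub_one_div_exp_sub_one_le_one ht, one_div_pos.mpr ht]

lemma one_div_exp_sub_one_le_two_mul_exp_neg {t : ℝ} (ht : 1 ≤ t) :
    1 / (exp t - 1) ≤ 2 * exp (-t) := by
  have h2 : 2 ≤ exp t := by linarith [add_one_le_exp t]
  rw [exp_neg, div_le_iff₀ (by linarith)]
  field_simp
  linarith

lemma hasSum_exp_neg_nat_succ_mul {t : ℝ} (ht : 0 < t) :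
    HasSum (fun n : ℕ => exp (-(n + 1) * t)) (1 / (exp t - 1)) := by
  have hq : exp (-t) < 1 := exp_lt_one_iff.mpr (neg_neg_of_pos ht)
  have hterm (n : ℕ) : exp (-t) * exp (-t) ^ n = exp (-(n + 1) * t) := by
    rw [← exp_nat_mul, ← exp_add]
    ring_nf
  have hsum : exp (-t) * (1 - exp (-t))⁻¹ = 1 / (exp t - 1) := by
    rw [exp_neg]
    field_simp
  simpa only [hterm, hsum] using
    (hasSum_geometric_of_lt_one (exp_pos (-t)).le hq).mul_left (exp (-t))

end Real

noncomputable def boseKernel (t : ℝ) : ℂ := ((1 / (Real.exp t - 1) : ℝ) : ℂ)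

lemma continuousOn_boseKernel : ContinuousOn boseKernel (Ioi 0) :=
  continuous_ofReal.comp_continuousOn <| continuousOn_const.div (by fun_prop)
    fun _ ht => (sub_pos.mpr (Real.one_lt_exp_iff.mpr ht)).ne'

lemma boseKernel_isBigO_atTop : boseKernel =O[atTop] fun t => Real.exp (-1 * t) := by
  refine IsBigO.of_bound 2 ?_
  filter_upwards [eventually_ge_atTop 1] with t ht
  rw [boseKernel, norm_real, Real.norm_of_nonneg (Real.one_div_exp_sub_one_nonneg (by linarith)),
    neg_one_mul, Real.norm_of_nonneg (Real.exp_pos _).le]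
  exact Real.one_div_exp_sub_one_le_two_mul_exp_neg ht

lemma boseKernel_isBigO_nhdsGT : boseKernel =O[𝓝[>] 0] (· ^ (-(1 : ℝ))) := by
  refine IsBigO.of_bound 1 ?_
  filter_upwards [self_mem_nhdsWithin] with t (ht : 0 < t)
  rw [boseKernel, norm_real, Real.norm_of_nonneg (Real.one_div_exp_sub_one_nonneg ht.le),
    Real.rpow_neg_one, one_mul, Real.norm_of_nonneg (inv_pos.mpr ht).le, ← one_div]
  exact Real.one_div_exp_sub_one_le_one_div ht

lemma hasMellin_boseKernel {s : ℂ} (hs : 1 < s.re) :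
    HasMellin boseKernel s (Gamma s * riemannZeta s) := by
  refine ⟨mellinConvergent_of_isBigO_rpow_exp one_pos
    (continuousOn_boseKernel.locallyIntegrableOn measurableSet_Ioi) boseKernel_isBigO_atTop
    boseKernel_isBigO_nhdsGT hs, ?_⟩
  have hsum := hasSum_mellin (a := fun _ : ℕ => 1) (p := fun n : ℕ => (n : ℝ) + 1) (F := boseKernel)
    (fun n => Or.inr (by positivity)) (by linarith)
    (fun t ht => by
      simpa [boseKernel] using (ofRealCLM.hasSum (Real.hasSum_exp_neg_nat_succ_mul ht)))
    (by simpa using (summable_nat_add_iff 1).mpr (Real.summable_one_div_nat_rpow.mpr hs))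
  rw [← hsum.tsum_eq, zeta_eq_tsum_one_div_nat_add_one_cpow hs, ← tsum_mul_left]
  simp [div_eq_mul_inv]

noncomputable def regBoseKernel (t : ℝ) : ℂ :=
  boseKernel t - indicator (Ioc 0 1) (fun t : ℝ => (t : ℂ) ^ (-1 : ℂ)) t

lemma locallyIntegrableOn_regBoseKernel : LocallyIntegrableOn regBoseKernel (Ioi 0) := by
  have hpole : LocallyIntegrableOn (fun t : ℝ => (t : ℂ) ^ (-1 : ℂ)) (Ioi 0) :=
    ContinuousOn.locallyIntegrableOn (fun t ht => (continuousAt_ofReal_cpow_const _ _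
      (Or.inr (ne_of_gt ht))).continuousWithinAt) measurableSet_Ioi
  refine (continuousOn_boseKernel.locallyIntegrableOn measurableSet_Ioi).sub fun t ht => ?_
  obtain ⟨K, hK, hint⟩ := hpole t ht
  exact ⟨K, hK, hint.indicator measurableSet_Ioc⟩

lemma regBoseKernel_eq_of_mem_Ioc {t : ℝ} (ht : t ∈ Ioc 0 1) :
    regBoseKernel t = ((1 / (Real.exp t - 1) - 1 / t : ℝ) : ℂ) := by
  simp [regBoseKernel, boseKernel, indicator_of_mem ht, cpow_neg_one]

lemma regBoseKernel_isBigO_atTop : regBoseKernel =O[atTop] fun t => Real.exp (-1 * t) := by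
  refine boseKernel_isBigO_atTop.congr' ?_ EventuallyEq.rfl
  filter_upwards [eventually_gt_atTop 1] with t ht
  simp [regBoseKernel, indicator_of_notMem (fun h : t ∈ Ioc (0 : ℝ) 1 => ht.not_ge h.2)]

lemma regBoseKernel_isBigO_nhdsGT : regBoseKernel =O[𝓝[>] 0] (· ^ (-(0 : ℝ))) := by
  refine IsBigO.of_bound 1 ?_
  filter_upwards [Ioo_mem_nhdsGT one_pos] with t ht
  rw [regBoseKernel_eq_of_mem_Ioc (Ioo_subset_Ioc_self ht), norm_real, Real.norm_eq_abs, neg_zero,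
    Real.rpow_zero, norm_one, mul_one]
  exact Real.abs_one_div_exp_sub_one_sub_one_div_le_one ht.1

lemma mellinConvergent_regBoseKernel {s : ℂ} (hs : 0 < s.re) : MellinConvergent regBoseKernel s :=
  mellinConvergent_of_isBigO_rpow_exp one_pos locallyIntegrableOn_regBoseKernel
    regBoseKernel_isBigO_atTop regBoseKernel_isBigO_nhdsGT hs

lemma differentiableAt_mellin_regBoseKernel {s : ℂ} (hs : 0 < s.re) :
    DifferentiableAt ℂ (mellin regBoseKernel) s :=
  mellin_differentiableAt_of_isBigO_rpow_exp one_pos locallyIntegrableOn_regBoseKernel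
    regBoseKernel_isBigO_atTop regBoseKernel_isBigO_nhdsGT hs

lemma hasMellin_regBoseKernel {s : ℂ} (hs : 1 < s.re) :
    HasMellin regBoseKernel s (Gamma s * riemannZeta s - 1 / (s - 1)) := by
  have hpole := hasMellin_cpow_Ioc (-1) (s := s) (by simpa using hs)
  have := hasMellin_sub (hasMellin_boseKernel hs).1 hpole.1
  rw [(hasMellin_boseKernel hs).2, hpole.2, ← sub_eq_add_neg] at this
  exact this

lemma Complex.differentiableAt_Gamma_of_re_pos {s : ℂ} (hs : 0 < s.re) :
    DifferentiableAt ℂ Gamma s :=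
  differentiableAt_Gamma s fun m hm => by
    have : s.re ≤ 0 := by simp [hm]
    linarith

-- Multiplying by `s - 1` removes the pole of `ζ`, so the identity theorem applies on the
-- (convex) half-plane `re s > 0` itself.
lemma mellin_regBoseKernel_add_one_div {s : ℂ} (hs : 0 < s.re) (hs1 : s ≠ 1) :
    mellin regBoseKernel s + 1 / (s - 1) = riemannZeta s * Gamma s := by
  have hopen : IsOpen {z : ℂ | 0 < z.re} := isOpen_lt continuous_const continuous_re
  have hmellin : AnalyticOnNhd ℂ (fun z => (z - 1) * mellin regBoseKernel z + 1) {z | 0 < z.re} :=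
    DifferentiableOn.analyticOnNhd (fun z hz => (((differentiableAt_id.sub_const 1).mul
      (differentiableAt_mellin_regBoseKernel hz)).add_const 1).differentiableWithinAt) hopen
  have hzeta : AnalyticOnNhd ℂ (fun z => riemannZeta₁ z * Gamma z) {z | 0 < z.re} :=
    DifferentiableOn.analyticOnNhd (fun z hz => (differentiable_riemannZeta₁ z |>.mul
      (differentiableAt_Gamma_of_re_pos hz)).differentiableWithinAt) hopen
  have hright : (fun z => (z - 1) * mellin regBoseKernel z + 1) =ᶠ[𝓝 2]
      fun z => riemannZeta₁ z * Gamma z := by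
    filter_upwards [(isOpen_lt continuous_const continuous_re).mem_nhds
      (show (1 : ℝ) < (2 : ℂ).re by norm_num)] with z (hz : 1 < z.re)
    have hz1 : z - 1 ≠ 0 := sub_ne_zero.mpr fun h => by simp [h] at hz
    rw [(hasMellin_regBoseKernel hz).2, riemannZeta_eq_inv_sub_mul (sub_ne_zero.mp hz1)]
    field_simp
    ring
  have heq : (s - 1) * mellin regBoseKernel s + 1 = riemannZeta₁ s * Gamma s :=
    hmellin.eqOn_of_preconnected_of_eventuallyEq hzeta
      (convex_halfSpace_re_gt 0).isPreconnected (by norm_num) hright hs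
  rw [riemannZeta_eq_inv_sub_mul hs1, mul_assoc, ← heq]
  field_simp

lemma hasMellin_one_Ioi {s : ℂ} (hs : s.re < 0) :
    HasMellin (indicator (Ioi 1) (fun _ => 1 : ℝ → ℂ)) s (-1 / s) := by
  have hexp : (s - 1).re < -1 := by rw [sub_re, one_re]; linarith
  simp_rw [HasMellin, mellin, MellinConvergent, ← indicator_smul, IntegrableOn,
    integrable_indicator_iff measurableSet_Ioi, smul_eq_mul, integral_indicator measurableSet_Ioi,
    mul_one, IntegrableOn, Measure.restrict_restrict_of_subset (Ioi_subset_Ioi zero_le_one)]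
  refine ⟨integrableOn_Ioi_cpow_of_lt hexp one_pos, ?_⟩
  rw [integral_Ioi_cpow_of_lt hexp one_pos, sub_add_cancel, ofReal_one, one_cpow]

lemma hasMellin_cpow_Ioi (a : ℂ) {s : ℂ} (hs : s.re + a.re < 0) :
    HasMellin (indicator (Ioi 1) (fun t => ↑t ^ a : ℝ → ℂ)) s (-1 / (s + a)) := by
  have := hasMellin_one_Ioi (by rwa [add_re] : (s + a).re < 0)
  simp_rw [HasMellin, ← MellinConvergent.cpow_smul, ← mellin_cpow_smul, ← indicator_smul,
    smul_eq_mul, mul_one] at this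
  exact this

lemma regBoseKernel_sub_indicator_eq {t : ℝ} (ht : 0 < t) :
    regBoseKernel t - indicator (Ioi 1) (fun t : ℝ => (t : ℂ) ^ (-1 : ℂ)) t =
      ((1 / (Real.exp t - 1) - 1 / t : ℝ) : ℂ) := by
  rcases le_or_gt t 1 with h | h
  · rw [regBoseKernel_eq_of_mem_Ioc ⟨ht, h⟩, indicator_of_notMem (notMem_Ioi.mpr h), sub_zero]
  · simp [regBoseKernel, boseKernel, indicator_of_mem (mem_Ioi.mpr h),
      indicator_of_notMem (fun h' : t ∈ Ioc (0 : ℝ) 1 => h.not_ge h'.2), cpow_neg_one]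

lemma mellin_one_div_exp_sub_one_sub_one_div {s : ℂ} (h1 : 0 < s.re) (h2 : s.re < 1) :
    mellin (fun t : ℝ => ((1 / (Real.exp t - 1) - 1 / t : ℝ) : ℂ)) s =
      riemannZeta s * Gamma s := by
  have htail := hasMellin_cpow_Ioi (-1) (s := s) (by rw [neg_re, one_re]; linarith)
  have hdiff := hasMellin_sub (mellinConvergent_regBoseKernel h1) htail.1
  have hs1 : s ≠ 1 := fun h => by simp [h] at h2
  rw [← mellin_regBoseKernel_add_one_div h1 hs1, mellin,
    setIntegral_congr_fun measurableSet_Ioi fun t ht => by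
      rw [← regBoseKernel_sub_indicator_eq ht], ← mellin, hdiff.2, htail.2]
  ring

/-- For `0 < Re s < 1`, `ζ(s)Γ(s) = ∫₀^∞ t^{s-1}(1/(e^t-1) - 1/t) dt`. -/
theorem zeta_Gamma_integral (s : ℂ) (h1 : 0 < s.re) (h2 : s.re < 1) :
    riemannZeta s * Complex.Gamma s =
      ∫ t in Set.Ioi (0:ℝ),
        (t:ℂ) ^ (s - 1) * (1 / (Real.exp t - 1) - 1/t : ℝ) := by
  rw [← mellin_one_div_exp_sub_one_sub_one_div h1 h2]
  simp only [mellin, smul_eq_mul]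
end

section
/- Let a ∈ ℝ with a > 0 and a ≠ 2π, and let f : (0,∞) → ℝ be a continuous absolutely integrable function whose Fourier sine transform g(x) = ∫₀^∞ sin(xt) f(t) dt is also absolutely integrable and satisfies the inversion formula f(x) = (2/π) ∫₀^∞ sin(xt) g(t) dt. Define Δ(x) = -π f(x/a)/(π² - aπ/2) - (a/(π² - aπ/2)) ∫₀^∞ sin(xt) f(t) dt. Then for all x > 0, π Δ(ax) = -f(x) + ∫₀^∞ sin(xt) Δ(t) dt. -/
/-!
Write `g = S f` for the sine transform. `Δ` is a combination of the dilate `f (· / a)` and of `g`;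
the substitution `t = a u` gives `S (f (· / a)) x = a g (a x)`, and inversion gives
`S g x = (π / 2) f x`. Hence `S Δ x` is an explicit combination of `g (a x)` and `f x`, and the
identity reduces to `π² / c = 1 + a π / (2 c)` for `c = π² - a π / 2`, which is nonzero as `a ≠ 2π`.
-/

open MeasureTheory Set Real

noncomputable def sineTransform (f : ℝ → ℝ) (x : ℝ) : ℝ :=
  ∫ t in Ioi 0, sin (x * t) * f t

lemma MeasureTheory.IntegrableOn.sin_mul {f : ℝ → ℝ} {s : Set ℝ} (hf : IntegrableOn f s)
    (c : ℝ) : IntegrableOn (fun t => sin (c * t) * f t) s :=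
  hf.bdd_mul (c := 1) (by fun_prop : Continuous fun t => sin (c * t)).aestronglyMeasurable
    (ae_of_all _ fun t => by simpa using abs_sin_le_one _)

section Dilation

variable {f : ℝ → ℝ} {a : ℝ}

lemma sin_mul_mul_comp_div (ha : a ≠ 0) (x t : ℝ) :
    sin (x * t) * f (t / a) = sin (a * x * (t * a⁻¹)) * f (t * a⁻¹) := by
  congr 2
  field_simp

lemma integrableOn_sin_mul_comp_div (ha : 0 < a) (hf : IntegrableOn f (Ioi 0)) (x : ℝ) :
    IntegrableOn (fun t => sin (x * t) * f (t / a)) (Ioi 0) := by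
  simp only [sin_mul_mul_comp_div ha.ne']
  refine (integrableOn_Ioi_comp_mul_right_iff (fun u => sin (a * x * u) * f u) 0
    (inv_pos.mpr ha)).mpr ?_
  simpa using hf.sin_mul (a * x)

lemma integral_sin_mul_comp_div (ha : 0 < a) (x : ℝ) :
    ∫ t in Ioi 0, sin (x * t) * f (t / a) = a * sineTransform f (a * x) := by
  simp only [sin_mul_mul_comp_div ha.ne']
  simpa [sineTransform] using
    integral_comp_mul_right_Ioi (fun u => sin (a * x * u) * f u) 0 (inv_pos.mpr ha)

lemma sineTransform_comp_div_sub (ha : 0 < a) (hf : IntegrableOn f (Ioi 0))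
    (hg : IntegrableOn (sineTransform f) (Ioi 0)) (α β x : ℝ) :
    sineTransform (fun t => α * f (t / a) - β * sineTransform f t) x
      = α * (a * sineTransform f (a * x)) - β * sineTransform (sineTransform f) x := by
  have hsplit : (fun t => sin (x * t) * (α * f (t / a) - β * sineTransform f t))
      = fun t => α * (sin (x * t) * f (t / a)) - β * (sin (x * t) * sineTransform f t) := by
    ext t; ring
  rw [sineTransform, hsplit, integral_sub ((integrableOn_sin_mul_comp_div ha hf x).const_mul α)
    ((hg.sin_mul x).const_mul β), integral_const_mul, integral_const_mul,
    integral_sin_mul_comp_div ha]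
  rfl

end Dilation

theorem fox_modified_solution_general (a : ℝ) (ha : 0 < a) (ha2 : a ≠ 2 * Real.pi)
    (f : ℝ → ℝ)
    (hf_int : MeasureTheory.IntegrableOn f (Set.Ioi 0))
    (hg_int : MeasureTheory.IntegrableOn
      (fun x => ∫ t in Set.Ioi (0:ℝ), Real.sin (x * t) * f t) (Set.Ioi 0))
    (hinv : ∀ x > 0, f x = (2/Real.pi) *
      ∫ t in Set.Ioi (0:ℝ), Real.sin (x * t) *
        (∫ u in Set.Ioi (0:ℝ), Real.sin (t * u) * f u))
    (Δ : ℝ → ℝ)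
    (hΔ : ∀ x, Δ x = -Real.pi * f (x/a) / (Real.pi^2 - a * Real.pi/2)
        - (a / (Real.pi^2 - a * Real.pi/2)) *
            ∫ t in Set.Ioi (0:ℝ), Real.sin (x * t) * f t) :
    ∀ x > 0, Real.pi * Δ (a * x) =
      -f x + ∫ t in Set.Ioi (0:ℝ), Real.sin (x * t) * Δ t := by
  intro x hx
  have ha2' : π * 2 - a ≠ 0 := by contrapose! ha2; linarith
  have hΔ_eq : Δ = fun t => (-π / (π ^ 2 - a * π / 2)) * f (t / a)
      - (a / (π ^ 2 - a * π / 2)) * sineTransform f t := by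
    ext t; rw [hΔ]; unfold sineTransform; ring
  have hinv_x : f x = 2 / π * sineTransform (sineTransform f) x := hinv x hx
  change π * Δ (a * x) = -f x + sineTransform Δ x
  rw [hΔ_eq, sineTransform_comp_div_sub ha hf_int hg_int]
  beta_reduce
  rw [mul_div_cancel_left₀ x ha.ne', hinv_x]
  field_simp
  ring

/-- For `a > 0`, `a ≠ 2π`, and `f` continuous, absolutely integrable on `(0,∞)`,
whose sine transform `g` is integrable and satisfies sine inversion, the function
`Δ(x) = -π f(x/a)/(π² - aπ/2) - (a/(π² - aπ/2)) ∫₀^∞ sin(xt) f(t) dt`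
solves `π Δ(ax) = -f(x) + ∫₀^∞ sin(xt) Δ(t) dt`. -/
theorem fox_modified_solution (a : ℝ) (ha : 0 < a) (ha2 : a ≠ 2 * Real.pi)
    (f : ℝ → ℝ) (hf_cont : ContinuousOn f (Set.Ioi 0))
    (hf_int : MeasureTheory.IntegrableOn f (Set.Ioi 0))
    (hg_int : MeasureTheory.IntegrableOn
      (fun x => ∫ t in Set.Ioi (0:ℝ), Real.sin (x * t) * f t) (Set.Ioi 0))
    (hinv : ∀ x > 0, f x = (2/Real.pi) *
      ∫ t in Set.Ioi (0:ℝ), Real.sin (x * t) *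
        (∫ u in Set.Ioi (0:ℝ), Real.sin (t * u) * f u))
    (Δ : ℝ → ℝ)
    (hΔ : ∀ x, Δ x = -Real.pi * f (x/a) / (Real.pi^2 - a * Real.pi/2)
        - (a / (Real.pi^2 - a * Real.pi/2)) *
            ∫ t in Set.Ioi (0:ℝ), Real.sin (x * t) * f t) :
    ∀ x > 0, Real.pi * Δ (a * x) =
      -f x + ∫ t in Set.Ioi (0:ℝ), Real.sin (x * t) * Δ t :=
  fox_modified_solution_general a ha ha2 f hf_int hg_int hinv Δ hΔ
end
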